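/- Let h : E → F be a tight homomorphism of semilattices with zero. Then the dual map ĥ : F̂_tight → Ê_tight, ĥ(ψ) = ψ ∘ h, is surjective if and only if h is tightly injective. -/

import Mathlib

/-- A finite subset `C` is a cover for `f`: every `c ∈ C` satisfies `c ≤ f` and every
nonzero `g ≤ f` meets some `c ∈ C`. -/
def IsCover {E : Type*} [SemilatticeInf E] [OrderBot E] (C : Finset E) (f : E) : Prop :=
  (∀ c ∈ C, c ≤ f) ∧ ∀ g : E, g ≠ ⊥ → g ≤ f → ∃ c ∈ C, g ⊓ c ≠ ⊥

/-- The (finite) family `{v i : i ∈ C}` is a cover for `f`. -/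
def IsCoverFam {ι : Type*} {E : Type*} [SemilatticeInf E] [OrderBot E]
    (C : Finset ι) (v : ι → E) (f : E) : Prop :=
  (∀ i ∈ C, v i ≤ f) ∧ ∀ g : E, g ≠ ⊥ → g ≤ f → ∃ i ∈ C, g ⊓ v i ≠ ⊥

/-- A character on a semilattice with zero: a multiplicative `{0,1}`-valued map sending
`0` to `0` and not identically zero. -/
def IsChar {E : Type*} [SemilatticeInf E] [OrderBot E] (φ : E → Bool) : Prop :=
  φ ⊥ = false ∧ (∀ e f : E, φ (e ⊓ f) = (φ e && φ f)) ∧ ∃ e : E, φ e = true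

/-- A tight character: a character such that, for every `f` and every cover `C` for `f`,
`φ f = max_{c ∈ C} φ c`. -/
def IsTightChar {E : Type*} [SemilatticeInf E] [OrderBot E] (φ : E → Bool) : Prop :=
  IsChar φ ∧ ∀ f : E, ∀ C : Finset E, IsCover C f → (φ f = true ↔ ∃ c ∈ C, φ c = true)

/-- A filter on a semilattice with zero. -/
def IsFilterOn {E : Type*} [SemilatticeInf E] [OrderBot E] (ξ : Set E) : Prop :=
  ξ.Nonempty ∧ ⊥ ∉ ξ ∧ (∀ e ∈ ξ, ∀ f ∈ ξ, e ⊓ f ∈ ξ) ∧ ∀ e ∈ ξ, ∀ f : E, e ≤ f → f ∈ ξ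

/-- A tight filter: whenever `C` is a cover for some `f ∈ ξ`, some element of `C` lies in `ξ`. -/
def IsTightFilter {E : Type*} [SemilatticeInf E] [OrderBot E] (ξ : Set E) : Prop :=
  IsFilterOn ξ ∧ ∀ f ∈ ξ, ∀ C : Finset E, IsCover C f → ∃ c ∈ C, c ∈ ξ

/-- The tight order: `e` is tightly below `f` iff there is no nonzero `g ≤ e` with `g ⊓ f = ⊥`. -/
def TightBelow {E : Type*} [SemilatticeInf E] [OrderBot E] (e f : E) : Prop :=
  ¬ ∃ g : E, g ≠ ⊥ ∧ g ≤ e ∧ g ⊓ f = ⊥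

/-- Tight equivalence. -/
def TightEquiv {E : Type*} [SemilatticeInf E] [OrderBot E] (e f : E) : Prop :=
  TightBelow e f ∧ TightBelow f e

/-- A homomorphism is tightly injective if it reflects tight equivalence. -/
def TightlyInjective {E F : Type*} [SemilatticeInf E] [OrderBot E] [SemilatticeInf F] [OrderBot F]
    (h : E → F) : Prop :=
  ∀ e₁ e₂ : E, TightEquiv (h e₁) (h e₂) → TightEquiv e₁ e₂

/-- A homomorphism is tightly surjective if its range is a large subset of the codomain:
for every `f` there is a finite `C ⊆ E` with `h e ≼ f` for all `e ∈ C` and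
`{f ⊓ h e : e ∈ C}` a cover for `f`. -/
def TightlySurjective {E F : Type*} [SemilatticeInf E] [OrderBot E] [SemilatticeInf F] [OrderBot F]
    (h : E → F) : Prop :=
  ∀ f : F, ∃ C : Finset E, (∀ e ∈ C, TightBelow (h e) f) ∧ IsCoverFam C (fun e => f ⊓ h e) f

/-- A homomorphism of semilattices with zero is tight if it satisfies conditions
(4.1.ii) and (4.3.ii) of the paper. -/
def IsTightHom {E F : Type*} [SemilatticeInf E] [OrderBot E] [SemilatticeInf F] [OrderBot F]
    (h : E → F) : Prop :=
  (∀ f : F, ∃ C : Finset E, IsCoverFam C (fun e => f ⊓ h e) f) ∧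
  (∀ e : E, ∀ C : Finset E, IsCover C e → IsCoverFam C h (h e))

/-!
A tight character `φ` of `E` is pinned down on any finite set `S` by a single nonzero `g`
(below the `e ∈ S` with `φ e = 1`, disjoint from those with `φ e = 0`): every character that
is `1` at `g` agrees with `φ` on `S`. A tightly injective `h` reflects zero, so `h g ≠ 0` lies in
a maximal filter of `F`, whose character `ψ` is tight and satisfies `ψ ∘ h = φ` on `S`. A limit
of these `ψ` along an ultrafilter on the finite subsets of `E` lifts `φ`, since tightness only
involves finitely many values at a time.

Conversely, if `g ≠ 0`, `g ≤ a` and `g ⊓ b = 0`, a tight character with `φ g = 1` has `φ a = 1`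
and `φ b = 0`; it has no lift when `h a ≼ h b`, because tight characters respect `≼`.
-/

section Characters

variable {E : Type*} [SemilatticeInf E] [OrderBot E] {φ : E → Bool}

theorem IsChar.apply_eq_true_of_le (hφ : IsChar φ) {a b : E} (hab : a ≤ b) (ha : φ a = true) :
    φ b = true := by
  have := hφ.2.1 a b
  rw [inf_eq_left.2 hab, ha] at this
  simpa using this.symm

theorem IsChar.apply_eq_false_of_inf_eq_bot (hφ : IsChar φ) {a b : E} (hab : a ⊓ b = ⊥)
    (ha : φ a = true) : φ b = false := by
  have := hφ.2.1 a b
  rw [hab, hφ.1, ha] at this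
  simpa using this.symm

theorem IsChar.isFilterOn (hφ : IsChar φ) : IsFilterOn {e | φ e = true} :=
  ⟨hφ.2.2, by simp [hφ.1], fun e he f hf => by simp_all [hφ.2.1],
    fun _ he _ hef => hφ.apply_eq_true_of_le hef he⟩

theorem IsChar.comp {F : Type*} [SemilatticeInf F] [OrderBot F] {ψ : F → Bool} (hψ : IsChar ψ)
    {h : E → F} (h0 : h ⊥ = ⊥) (hinf : ∀ a b : E, h (a ⊓ b) = h a ⊓ h b) {e : E}
    (he : ψ (h e) = true) : IsChar (fun e => ψ (h e)) :=
  ⟨by simp only [h0, hψ.1], fun a b => by simp only [hinf, hψ.2.1], e, he⟩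

end Characters

section Filters

variable {E : Type*} [SemilatticeInf E] [OrderBot E] {ξ : Set E}

theorem IsFilterOn.exists_le_of_finset (hξ : IsFilterOn ξ) {ι : Type*} (s : Finset ι)
    {x : ι → E} (hx : ∀ i ∈ s, x i ∈ ξ) : ∃ y ∈ ξ, ∀ i ∈ s, y ≤ x i := by
  classical
  induction s using Finset.induction_on with
  | empty =>
    obtain ⟨y, hy⟩ := hξ.1
    exact ⟨y, hy, by simp⟩
  | insert i s _ ih =>
    rw [Finset.forall_mem_insert] at hx
    obtain ⟨y, hy, hys⟩ := ih hx.2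
    refine ⟨y ⊓ x i, hξ.2.2.1 _ hy _ hx.1, ?_⟩
    rw [Finset.forall_mem_insert]
    exact ⟨inf_le_right, fun j hj => inf_le_left.trans (hys j hj)⟩

theorem isFilterOn_Ici {x : E} (hx : x ≠ ⊥) : IsFilterOn (Set.Ici x) :=
  ⟨⟨x, le_rfl⟩, fun hb => hx (le_bot_iff.1 hb), fun _ he _ hf => le_inf he hf,
    fun _ he _ hef => he.trans hef⟩

theorem isFilterOn_sUnion {c : Set (Set E)} (hc : ∀ ξ ∈ c, IsFilterOn ξ)
    (hchain : IsChain (· ⊆ ·) c) (hne : c.Nonempty) : IsFilterOn (⋃₀ c) := by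
  obtain ⟨ξ, hξ⟩ := hne
  refine ⟨(hc ξ hξ).1.mono (Set.subset_sUnion_of_mem hξ), fun ⟨η, hη, hb⟩ => (hc η hη).2.1 hb,
    ?_, fun e ⟨η, hη, he⟩ f hef => ⟨η, hη, (hc η hη).2.2.2 e he f hef⟩⟩
  rintro e ⟨η₁, hη₁, he⟩ f ⟨η₂, hη₂, hf⟩
  rcases hchain.total hη₁ hη₂ with h12 | h21
  · exact ⟨η₂, hη₂, (hc η₂ hη₂).2.2.1 e (h12 he) f hf⟩
  · exact ⟨η₁, hη₁, (hc η₁ hη₁).2.2.1 e he f (h21 hf)⟩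

theorem exists_maximal_isFilterOn {x : E} (hx : x ≠ ⊥) : ∃ ξ, x ∈ ξ ∧ Maximal IsFilterOn ξ := by
  obtain ⟨ξ, hxξ, hξ⟩ := zorn_subset_nonempty {ξ : Set E | IsFilterOn ξ}
    (fun c hc hchain hne => ⟨⋃₀ c, isFilterOn_sUnion hc hchain hne,
      fun _ => Set.subset_sUnion_of_mem⟩) _ (isFilterOn_Ici hx)
  exact ⟨ξ, hxξ le_rfl, hξ⟩

theorem mem_of_maximal_of_forall_inf_ne_bot (hξ : Maximal IsFilterOn ξ) {c : E}
    (hc : ∀ x ∈ ξ, x ⊓ c ≠ ⊥) : c ∈ ξ := by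
  have hgen : IsFilterOn {z | ∃ x ∈ ξ, x ⊓ c ≤ z} := by
    obtain ⟨⟨w, hw⟩, -, hinf, -⟩ := hξ.1
    refine ⟨⟨_, w, hw, le_rfl⟩, fun ⟨x, hx, hxc⟩ => hc x hx (le_bot_iff.1 hxc), ?_,
      fun _ ⟨x, hx, hxc⟩ _ hef => ⟨x, hx, hxc.trans hef⟩⟩
    rintro _ ⟨x₁, hx₁, h₁⟩ _ ⟨x₂, hx₂, h₂⟩
    exact ⟨x₁ ⊓ x₂, hinf _ hx₁ _ hx₂, le_inf ((inf_le_inf_right c inf_le_left).trans h₁)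
      ((inf_le_inf_right c inf_le_right).trans h₂)⟩
  obtain ⟨w, hw⟩ := hξ.1.1
  exact hξ.2 hgen (fun x hx => ⟨x, hx, inf_le_left⟩) ⟨w, hw, inf_le_right⟩

theorem isTightFilter_of_maximal (hξ : Maximal IsFilterOn ξ) : IsTightFilter ξ := by
  refine ⟨hξ.1, fun f hf C hC => ?_⟩
  by_contra! hCξ
  have hsep : ∀ c ∈ C, ∃ x ∈ ξ, x ⊓ c = ⊥ := fun c hc => by
    by_contra! hmeet
    exact hCξ c hc (mem_of_maximal_of_forall_inf_ne_bot hξ hmeet)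
  choose! x hxξ hxc using hsep
  obtain ⟨y, hyξ, hyx⟩ := hξ.1.exists_le_of_finset C hxξ
  have hyf : y ⊓ f ∈ ξ := hξ.1.2.2.1 _ hyξ _ hf
  obtain ⟨c, hcC, hc⟩ := hC.2 (y ⊓ f) (fun hb => hξ.1.2.1 (hb ▸ hyf)) inf_le_right
  exact hc (le_bot_iff.1 ((inf_le_inf_right c (inf_le_left.trans (hyx c hcC))).trans
    (hxc c hcC).le))

open Classical in
theorem IsTightFilter.isTightChar (hξ : IsTightFilter ξ) :
    IsTightChar (fun e => decide (e ∈ ξ)) := by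
  obtain ⟨⟨⟨w, hw⟩, hbot, hinf, hup⟩, htight⟩ := hξ
  refine ⟨⟨by simpa using hbot, fun e f => ?_, w, by simpa using hw⟩, fun f C hC => ?_⟩
  · rw [← Bool.decide_and, decide_eq_decide]
    exact ⟨fun hef => ⟨hup _ hef _ inf_le_left, hup _ hef _ inf_le_right⟩,
      fun ⟨he, hf⟩ => hinf e he f hf⟩
  · simp only [decide_eq_true_eq]
    exact ⟨fun hf => htight f hf C hC, fun ⟨c, hcC, hc⟩ => hup c hc f (hC.1 c hcC)⟩

theorem exists_isTightChar_apply_eq_true {x : E} (hx : x ≠ ⊥) :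
    ∃ φ : E → Bool, IsTightChar φ ∧ φ x = true := by
  classical
  obtain ⟨ξ, hxξ, hξ⟩ := exists_maximal_isFilterOn hx
  exact ⟨_, (isTightFilter_of_maximal hξ).isTightChar, by simpa using hxξ⟩

end Filters

section TightCharacters

variable {E : Type*} [SemilatticeInf E] [OrderBot E] {φ : E → Bool}

theorem isCover_singleton_inf {a b : E} (hab : TightBelow a b) : IsCover {a ⊓ b} a := by
  refine ⟨by simp, fun g hg hga => ⟨a ⊓ b, Finset.mem_singleton_self _, fun hgab => ?_⟩⟩
  rw [← inf_assoc, inf_eq_left.2 hga] at hgab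
  exact hab ⟨g, hg, hga, hgab⟩

theorem IsTightChar.apply_eq_true_of_tightBelow (hφ : IsTightChar φ) {a b : E}
    (hab : TightBelow a b) (ha : φ a = true) : φ b = true := by
  obtain ⟨c, hc, hφc⟩ := (hφ.2 a _ (isCover_singleton_inf hab)).1 ha
  rw [Finset.mem_singleton.1 hc] at hφc
  exact hφ.1.apply_eq_true_of_le inf_le_right hφc

theorem IsTightChar.exists_ne_bot_le_inf_eq_bot (hφ : IsTightChar φ) {x : E} (hx : φ x = true)
    (T : Finset E) (hT : ∀ e ∈ T, φ e = false) : ∃ g ≠ ⊥, g ≤ x ∧ ∀ e ∈ T, g ⊓ e = ⊥ := by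
  classical
  by_contra! hmeet
  have hcov : IsCover (T.image (x ⊓ ·)) x := by
    refine ⟨by simp, fun g hg hgx => ?_⟩
    obtain ⟨e, he, hge⟩ := hmeet g hg hgx
    exact ⟨x ⊓ e, Finset.mem_image_of_mem _ he, by rwa [← inf_assoc, inf_eq_left.2 hgx]⟩
  obtain ⟨_, hc, hφc⟩ := (hφ.2 x _ hcov).1 hx
  obtain ⟨e, he, rfl⟩ := Finset.mem_image.1 hc
  exact absurd (hT e he) (by simp [hφ.1.apply_eq_true_of_le inf_le_right hφc])

theorem IsTightChar.exists_ne_bot_forall_eq (hφ : IsTightChar φ) (S : Finset E) :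
    ∃ g ≠ ⊥, ∀ χ : E → Bool, IsChar χ → χ g = true → ∀ e ∈ S, χ e = φ e := by
  classical
  obtain ⟨x, hx, hxS⟩ := hφ.1.isFilterOn.exists_le_of_finset (S.filter (φ · = true)) (x := id)
    (by simp)
  obtain ⟨g, hg, hgx, hgS⟩ :=
    hφ.exists_ne_bot_le_inf_eq_bot hx (S.filter (φ · = false)) (by simp)
  refine ⟨g, hg, fun χ hχ hχg e he => ?_⟩
  cases hφe : φ e
  · exact hχ.apply_eq_false_of_inf_eq_bot (hgS e (by simp [he, hφe])) hχg
  · exact hχ.apply_eq_true_of_le (hgx.trans (hxS e (by simp [he, hφe]))) hχg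

theorem isTightChar_of_forall_finset {φ : E → Bool} (hφ : ∃ e, φ e = true)
    (H : ∀ s : Finset E, ∃ χ, IsTightChar χ ∧ ∀ e ∈ s, χ e = φ e) : IsTightChar φ := by
  classical
  refine ⟨⟨?_, fun a b => ?_, hφ⟩, fun f C hC => ?_⟩
  · obtain ⟨χ, hχ, hχφ⟩ := H {⊥}
    rw [← hχφ ⊥ (Finset.mem_singleton_self _), hχ.1.1]
  · obtain ⟨χ, hχ, hχφ⟩ := H {a ⊓ b, a, b}
    simp only [Finset.mem_insert, Finset.mem_singleton, forall_eq_or_imp, forall_eq] at hχφ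
    rw [← hχφ.1, ← hχφ.2.1, ← hχφ.2.2, hχ.1.2.1]
  · obtain ⟨χ, hχ, hχφ⟩ := H (insert f C)
    rw [Finset.forall_mem_insert] at hχφ
    rw [← hχφ.1, hχ.2 f C hC]
    exact exists_congr fun c => and_congr_right fun hc => by rw [hχφ.2 c hc]

end TightCharacters

theorem Ultrafilter.exists_forall_eventually_apply_eq {ι α : Type*} (U : Ultrafilter ι)
    (u : ι → α → Bool) : ∃ v : α → Bool, ∀ a, ∀ᶠ i in U, u i a = v a := by
  classical
  refine ⟨fun a => decide (∀ᶠ i in U, u i a = true), fun a => ?_⟩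
  by_cases ha : ∀ᶠ i in U, u i a = true
  · simp [ha]
  · simpa [ha] using U.eventually_not.2 ha

theorem exists_isTightChar_comp_eq_of_forall_finset {E F : Type*} [SemilatticeInf F]
    [OrderBot F] {h : E → F} {φ : E → Bool} (hφ : ∃ e, φ e = true)
    (H : ∀ S : Finset E, ∃ ψ : F → Bool, IsTightChar ψ ∧ ∀ e ∈ S, ψ (h e) = φ e) :
    ∃ ψ : F → Bool, IsTightChar ψ ∧ (fun e => ψ (h e)) = φ := by
  choose ψS hψS hψSφ using H
  let U : Ultrafilter (Finset E) := .of Filter.atTop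
  obtain ⟨ψ, hψ⟩ := U.exists_forall_eventually_apply_eq ψS
  have hψφ : ∀ e, ψ (h e) = φ e := fun e => by
    obtain ⟨S, hS, heS⟩ :=
      ((hψ (h e)).and (Ultrafilter.of_le _ (Filter.eventually_ge_atTop {e}))).exists
    rw [← hS, hψSφ S e (Finset.singleton_subset_iff.1 heS)]
  obtain ⟨e, he⟩ := hφ
  refine ⟨ψ, isTightChar_of_forall_finset ⟨h e, (hψφ e).trans he⟩ fun s => ?_, funext hψφ⟩
  obtain ⟨S, hS⟩ := ((Filter.eventually_all_finset s).2 fun f _ => hψ f).exists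
  exact ⟨ψS S, hψS S, hS⟩

section DualMap

variable {E F : Type*} [SemilatticeInf E] [OrderBot E] [SemilatticeInf F] [OrderBot F]
  {h : E → F}

theorem tightBelow_of_tightBelow_map
    (hsurj : ∀ φ : E → Bool, IsTightChar φ →
      ∃ ψ : F → Bool, IsTightChar ψ ∧ (fun e => ψ (h e)) = φ)
    {a b : E} (hab : TightBelow (h a) (h b)) : TightBelow a b := by
  rintro ⟨g, hg, hga, hgb⟩
  obtain ⟨φ, hφ, hφg⟩ := exists_isTightChar_apply_eq_true hg
  obtain ⟨ψ, hψ, rfl⟩ := hsurj φ hφ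
  have := hψ.apply_eq_true_of_tightBelow hab (hφ.1.apply_eq_true_of_le hga hφg)
  simp [hφ.1.apply_eq_false_of_inf_eq_bot hgb hφg] at this

theorem tightBelow_bot_left (x : E) : TightBelow ⊥ x :=
  fun ⟨_, hg, hg0, _⟩ => hg (le_bot_iff.1 hg0)

theorem TightlyInjective.map_ne_bot (hinj : TightlyInjective h) (h0 : h ⊥ = ⊥) {g : E}
    (hg : g ≠ ⊥) : h g ≠ ⊥ := fun hhg =>
  (hinj g ⊥ (by rw [hhg, h0]; exact ⟨tightBelow_bot_left _, tightBelow_bot_left _⟩)).1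
    ⟨g, hg, le_rfl, inf_bot_eq g⟩

end DualMap

theorem dualMap_surjective_iff_tightlyInjective_general {E F : Type*} [SemilatticeInf E] [OrderBot E]
    [SemilatticeInf F] [OrderBot F]
    (h : E → F) (h0 : h ⊥ = ⊥) (hinf : ∀ a b : E, h (a ⊓ b) = h a ⊓ h b) :
    (∀ φ : E → Bool, IsTightChar φ →
      ∃ ψ : F → Bool, IsTightChar ψ ∧ (fun e => ψ (h e)) = φ) ↔
    TightlyInjective h := by
  refine ⟨fun hsurj a b hab => ⟨tightBelow_of_tightBelow_map hsurj hab.1,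
    tightBelow_of_tightBelow_map hsurj hab.2⟩, fun hinj φ hφ => ?_⟩
  refine exists_isTightChar_comp_eq_of_forall_finset hφ.1.2.2 fun S => ?_
  obtain ⟨g, hg, hgS⟩ := hφ.exists_ne_bot_forall_eq S
  obtain ⟨ψ, hψ, hψg⟩ := exists_isTightChar_apply_eq_true (hinj.map_ne_bot h0 hg)
  exact ⟨ψ, hψ, hgS _ (hψ.1.comp h0 hinf hψg) hψg⟩

/-- If `h : E → F` is a tight homomorphism of semilattices with zero,
then the dual map `ĥ : F̂_tight → Ê_tight`, `ĥ ψ = ψ ∘ h`, is surjective if and only if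
`h` is tightly injective. -/
theorem dualMap_surjective_iff_tightlyInjective {E F : Type*} [SemilatticeInf E] [OrderBot E]
    [SemilatticeInf F] [OrderBot F]
    (h : E → F) (h0 : h ⊥ = ⊥) (hinf : ∀ a b : E, h (a ⊓ b) = h a ⊓ h b)
    (ht : IsTightHom h) :
    (∀ φ : E → Bool, IsTightChar φ →
      ∃ ψ : F → Bool, IsTightChar ψ ∧ (fun e => ψ (h e)) = φ) ↔
    TightlyInjective h :=
  dualMap_surjective_iff_tightlyInjective_general h h0 hinf
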